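/- Let ℓ ≥ 2 and let x < y be consecutive elements of V̄_ℓ. Then {x,y} is not contained in V̄_{ℓ+2}, the intersection {x,y} ∩ V̄_{ℓ+1} is nonempty, and |ᾱ(y) − ᾱ(x)| ≥ y − x. -/
import Mathlib


noncomputable section

/-- `F i` is the Fibonacci number `F_i` of the paper (`F_0 = 1`, `F_1 = 1`, `F_2 = 2`, ...). -/
def F (i : ℕ) : ℕ := Nat.fib (i + 1)

/-- `x` belongs to the set `F̄ = {0,1,2,3,5,8,...}` of all Fibonacci numbers (including `0`). -/
def IsFib (x : ℕ) : Prop := ∃ i : ℕ, Nat.fib i = x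

open scoped Classical in
/-- The map `ῑ : ℕ → ℕ`: `ῑ(x) = x` if `x ∈ F̄`, and `ῑ(x) = x - 2 F_{i-2}`
if `F_i < x < F_{i+1}` for the (unique) integer `i ≥ 3`. -/
noncomputable def iotaBar (x : ℕ) : ℕ :=
  if IsFib x then x
  else x - 2 * F (sInf {i : ℕ | x < F (i + 1)} - 2)

/-- `ᾱ(x)` is the eventual constant value of the iterates of `ῑ` at `x`
(the iterates stabilize after at most `x` steps). -/
noncomputable def alphaBar (x : ℕ) : ℕ := iotaBar^[x] x

/-- `V̄_ℓ = {x ∈ ℕ : ᾱ(x) ≥ F_ℓ}`. -/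
def VBar (ℓ : ℕ) : Set ℕ := {x : ℕ | F ℓ ≤ alphaBar x}

/-- `x < y` are consecutive elements of `S`. -/
def ConsecIn (S : Set ℕ) (x y : ℕ) : Prop :=
  x ∈ S ∧ y ∈ S ∧ x < y ∧ ∀ z ∈ S, ¬(x < z ∧ z < y)


lemma F_add_two (m : ℕ) : F (m + 2) = F (m + 1) + F m := by
  simp [F, Nat.fib_add_two]; ring

lemma F_pos (i : ℕ) : 0 < F i := Nat.fib_pos.2 (Nat.succ_pos i)

lemma F_mono : Monotone F := fun i j h => Nat.fib_mono (by omega)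

lemma F_lt_F {i j : ℕ} (h1 : 1 ≤ i) (h2 : i < j) : F i < F j := by
  have h3 : F i < F (i + 1) := by
    have := Nat.fib_lt_fib_succ (n := i + 1) (by omega)
    simpa [F] using this
  exact lt_of_lt_of_le h3 (F_mono (by omega))

lemma isFib_F (i : ℕ) : IsFib (F i) := ⟨i + 1, rfl⟩

lemma not_isFib_between {i z : ℕ} (h1 : F i < z) (h2 : z < F (i + 1)) : ¬ IsFib z := by
  rintro ⟨j, rfl⟩
  rcases le_or_gt j (i + 1) with h | h
  · exact absurd (Nat.fib_mono h) (by simpa [F] using h1.not_ge)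
  · have h3 : Nat.fib (i + 1 + 1) ≤ Nat.fib j := Nat.fib_mono (by omega)
    simp only [F] at h2; omega

lemma iotaBar_eq_of_isFib {x : ℕ} (h : IsFib x) : iotaBar x = x := by
  simp [iotaBar, h]

lemma iotaBar_between {i x : ℕ} (h1 : F i < x) (h2 : x < F (i + 1)) :
    iotaBar x = x - 2 * F (i - 2) := by
  have hnf := not_isFib_between h1 h2
  have hs : sInf {j : ℕ | x < F (j + 1)} = i := by
    have hi : i ∈ {j : ℕ | x < F (j + 1)} := h2
    refine le_antisymm (Nat.sInf_le hi) ?_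
    by_contra hc
    push_neg at hc
    have hmem := Nat.sInf_mem (⟨i, hi⟩ : {j : ℕ | x < F (j + 1)}.Nonempty)
    have : F (sInf {j : ℕ | x < F (j + 1)} + 1) ≤ F i := F_mono (by omega)
    exact absurd (lt_of_lt_of_le hmem this) (by omega)
  simp [iotaBar, hnf, hs]

lemma iotaBar_le (x : ℕ) : iotaBar x ≤ x := by
  by_cases h : IsFib x
  · simp [iotaBar_eq_of_isFib h]
  · simp [iotaBar, h]

lemma exists_F_interval : ∀ x : ℕ, 1 ≤ x → ∃ i, 1 ≤ i ∧ F i ≤ x ∧ x < F (i + 1) := by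
  intro x hx
  induction x with
  | zero => omega
  | succ n ih =>
    rcases Nat.eq_or_lt_of_le hx with h | h
    · obtain rfl : n = 0 := by omega
      exact ⟨1, le_rfl, by norm_num [F], by norm_num [F]⟩
    · obtain ⟨i, hi1, hi2, hi3⟩ := ih (by omega)
      rcases lt_or_ge (n + 1) (F (i + 1)) with h' | h'
      · exact ⟨i, hi1, by omega, h'⟩
      · refine ⟨i + 1, by omega, h', ?_⟩
        have : F (i + 1) < F (i + 1 + 1) := F_lt_F (by omega) (by omega)
        omega

lemma iotaBar_lt {x : ℕ} (hx : 1 ≤ x) (h : ¬ IsFib x) : iotaBar x < x := by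
  obtain ⟨i, hi1, hi2, hi3⟩ := exists_F_interval x hx
  have hne : F i ≠ x := fun he => h (he ▸ isFib_F i)
  rw [iotaBar_between (by omega) hi3]
  have := F_pos (i - 2)
  omega

lemma isFib_zero : IsFib 0 := ⟨0, rfl⟩

lemma isFib_iterate : ∀ n : ℕ, ∀ x : ℕ, x ≤ n → IsFib (iotaBar^[n] x) := by
  intro n
  induction n with
  | zero => intro x hx; simp [Nat.le_zero.mp hx, isFib_zero]
  | succ n ih =>
    intro x hx
    by_cases h : IsFib x
    · rw [Function.iterate_fixed (iotaBar_eq_of_isFib h)]; exact h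
    · rcases Nat.eq_zero_or_pos x with rfl | hpos
      · exact absurd isFib_zero h
      · rw [Function.iterate_succ_apply]
        exact ih _ (by have := iotaBar_lt hpos h; omega)

lemma isFib_alphaBar (x : ℕ) : IsFib (alphaBar x) := isFib_iterate x x le_rfl

lemma alphaBar_of_isFib {x : ℕ} (h : IsFib x) : alphaBar x = x :=
  Function.iterate_fixed (iotaBar_eq_of_isFib h) x

lemma alphaBar_le (x : ℕ) : alphaBar x ≤ x := by
  have : ∀ n, iotaBar^[n] x ≤ x := by
    intro n
    induction n with
    | zero => simp
    | succ n ih => rw [Function.iterate_succ_apply']; exact le_trans (iotaBar_le _) ih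
  exact this x

lemma iterate_eq_alphaBar {x n : ℕ} (h : x ≤ n) : iotaBar^[n] x = alphaBar x := by
  obtain ⟨k, rfl⟩ := Nat.exists_eq_add_of_le h
  rw [Nat.add_comm, Function.iterate_add_apply]
  exact Function.iterate_fixed (iotaBar_eq_of_isFib (isFib_alphaBar x)) k

lemma alphaBar_iotaBar (x : ℕ) : alphaBar (iotaBar x) = alphaBar x := by
  by_cases h : IsFib x
  · rw [iotaBar_eq_of_isFib h]
  · rcases Nat.eq_zero_or_pos x with rfl | hpos
    · exact absurd isFib_zero h
    · have hlt := iotaBar_lt hpos h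
      have : iotaBar^[x - 1] (iotaBar x) = alphaBar x := by
        rw [← Function.iterate_succ_apply]
        have h2 : (x - 1).succ = x := by omega
        rw [h2]; rfl
      rw [← this, iterate_eq_alphaBar (by omega)]

/-- The key reduction: `α(F i + r) = α(F (i-3) + r)` for `0 < r < F (i-1)`, `i ≥ 3`. -/
lemma alphaBar_reduce {i r : ℕ} (h3 : 3 ≤ i) (hr : 0 < r) (hr2 : r < F (i - 1)) :
    alphaBar (F i + r) = alphaBar (F (i - 3) + r) := by
  have e1 : F (i - 3) + F (i - 2) = F (i - 1) := by
    have := F_add_two (i - 3); have h : i - 3 + 2 = i - 1 := by omega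
    have h' : i - 3 + 1 = i - 2 := by omega
    rw [h, h'] at this; omega
  have e2 : F (i - 2) + F (i - 1) = F i := by
    have := F_add_two (i - 2); have h : i - 2 + 2 = i := by omega
    have h' : i - 2 + 1 = i - 1 := by omega
    rw [h, h'] at this; omega
  have e3 : F (i - 1) + F i = F (i + 1) := by
    have := F_add_two (i - 1); have h : i - 1 + 2 = i + 1 := by omega
    have h' : i - 1 + 1 = i := by omega
    rw [h, h'] at this; omega
  have h1 : F i < F i + r := by omega
  have h2 : F i + r < F (i + 1) := by omega
  have := iotaBar_between h1 h2
  have harg : F i + r - 2 * F (i - 2) = F (i - 3) + r := by omega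
  rw [← alphaBar_iotaBar (F i + r), this, harg]

lemma F_split (a b c : ℕ) (h1 : b + 1 = a) (h2 : c + 1 = b) : F a = F b + F c := by
  subst h1; subst h2; exact F_add_two c

/-- Two-step reduction: `α(F (i+1) - t) = α(F (i-2) - t)` for `0 < t < F (i-3)`, `i ≥ 4`. -/
lemma alphaBar_reduce2 {i t : ℕ} (h4 : 4 ≤ i) (ht : 0 < t) (ht2 : t < F (i - 3)) :
    alphaBar (F (i + 1) - t) = alphaBar (F (i - 2) - t) := by
  have e1 : F (i - 1) = F (i - 2) + F (i - 3) := F_split _ _ _ (by omega) (by omega)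
  have e2 : F i = F (i - 1) + F (i - 2) := F_split _ _ _ (by omega) (by omega)
  have e3 : F (i + 1) = F i + F (i - 1) := F_split _ _ _ (by omega) (by omega)
  have e4 : F (i - 2) = F (i - 3) + F (i - 4) := F_split _ _ _ (by omega) (by omega)
  have m1 : F (i - 3) ≤ F (i - 1) := F_mono (by omega)
  have hstep1 : alphaBar (F i + (F (i - 1) - t)) = alphaBar (F (i - 3) + (F (i - 1) - t)) :=
    alphaBar_reduce (by omega) (by omega) (by have := F_pos (i - 1); omega)
  have hstep2 : alphaBar (F (i - 1) + (F (i - 3) - t)) =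
      alphaBar (F (i - 1 - 3) + (F (i - 3) - t)) := by
    refine alphaBar_reduce (by omega) (by omega) ?_
    have : F (i - 3) ≤ F (i - 1 - 1) := F_mono (by omega)
    omega
  have a1 : F (i + 1) - t = F i + (F (i - 1) - t) := by omega
  have a2 : F (i - 3) + (F (i - 1) - t) = F (i - 1) + (F (i - 3) - t) := by omega
  have a4 : i - 1 - 3 = i - 4 := by omega
  have a3 : F (i - 4) + (F (i - 3) - t) = F (i - 2) - t := by omega
  rw [a1, hstep1, a2, hstep2, a4, a3]

/-- No elements of `V̄_ℓ` strictly between `F ℓ` and `F (ℓ+1)`. -/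
lemma alphaBar_lt_of_between {ℓ z : ℕ} (hℓ : 2 ≤ ℓ) (h1 : F ℓ < z) (h2 : z < F (ℓ + 1)) :
    alphaBar z < F ℓ := by
  rcases eq_or_lt_of_le hℓ with rfl | hl3
  · norm_num [F] at h1 h2; omega
  · have hℓ3 : 3 ≤ ℓ := hl3
    have e3 : F (ℓ + 1) = F ℓ + F (ℓ - 1) := F_split _ _ _ (by omega) (by omega)
    have e2 : F ℓ = F (ℓ - 1) + F (ℓ - 2) := F_split _ _ _ (by omega) (by omega)
    have m1 : F (ℓ - 3) ≤ F (ℓ - 2) := F_mono (by omega)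
    have hz : z = F ℓ + (z - F ℓ) := by omega
    rw [hz, alphaBar_reduce hℓ3 (by omega) (by omega)]
    have := alphaBar_le (F (ℓ - 3) + (z - F ℓ))
    omega

lemma succ_lemma {ℓ : ℕ} (hℓ : 2 ≤ ℓ) :
    ∀ i, ℓ ≤ i → ∃ r0, 0 < r0 ∧ r0 ≤ F (ℓ - 1) ∧ F ℓ ≤ alphaBar (F i + r0) := by
  intro i
  induction i using Nat.strong_induction_on with
  | _ i IH =>
    intro hi
    have hFpos := F_pos (ℓ - 1)
    have hFpos2 := F_pos (ℓ - 2)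
    have eℓ : F (ℓ + 1) = F ℓ + F (ℓ - 1) := F_split _ _ _ (by omega) (by omega)
    have eℓ2 : F ℓ = F (ℓ - 1) + F (ℓ - 2) := F_split _ _ _ (by omega) (by omega)
    rcases (by omega : i = ℓ ∨ i = ℓ + 1 ∨ i = ℓ + 2 ∨ ℓ + 3 ≤ i) with h | h | h | hbig
    · rw [h]
      refine ⟨F (ℓ - 1), hFpos, le_rfl, ?_⟩
      rw [← eℓ, alphaBar_of_isFib (isFib_F _)]
      exact F_mono (by omega)
    · rw [h]
      refine ⟨F (ℓ - 1), hFpos, le_rfl, ?_⟩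
      have hred : alphaBar (F (ℓ + 1) + F (ℓ - 1)) =
          alphaBar (F (ℓ + 1 - 3) + F (ℓ - 1)) := by
        refine alphaBar_reduce (by omega) hFpos ?_
        have h1 : F (ℓ - 1) < F ℓ := F_lt_F (i := ℓ - 1) (j := ℓ) (by omega) (by omega)
        have h2 : ℓ + 1 - 1 = ℓ := by omega
        rw [h2]; exact h1
      have h3 : ℓ + 1 - 3 = ℓ - 2 := by omega
      rw [hred, h3, (by omega : F (ℓ - 2) + F (ℓ - 1) = F ℓ), alphaBar_of_isFib (isFib_F _)]
    · rw [h]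
      refine ⟨F (ℓ - 2), hFpos2, F_mono (by omega), ?_⟩
      have hred : alphaBar (F (ℓ + 2) + F (ℓ - 2)) =
          alphaBar (F (ℓ + 2 - 3) + F (ℓ - 2)) := by
        refine alphaBar_reduce (by omega) hFpos2 ?_
        have h1 : F (ℓ - 2) < F (ℓ + 1) :=
          lt_of_le_of_lt (F_mono (by omega : ℓ - 2 ≤ ℓ))
            (F_lt_F (i := ℓ) (j := ℓ + 1) (by omega) (by omega))
        have h2 : ℓ + 2 - 1 = ℓ + 1 := by omega
        rw [h2]; exact h1
      have h3 : ℓ + 2 - 3 = ℓ - 1 := by omega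
      rw [hred, h3, (by omega : F (ℓ - 1) + F (ℓ - 2) = F ℓ), alphaBar_of_isFib (isFib_F _)]
    · obtain ⟨r0, h1, h2, h3⟩ := IH (i - 3) (by omega) (by omega)
      refine ⟨r0, h1, h2, ?_⟩
      have hred : alphaBar (F i + r0) = alphaBar (F (i - 3) + r0) := by
        refine alphaBar_reduce (by omega) h1 (lt_of_le_of_lt h2 ?_)
        exact F_lt_F (i := ℓ - 1) (j := i - 1) (by omega) (by omega)
      rw [hred]; exact h3

lemma q2_lemma {ℓ : ℕ} (hℓ : 2 ≤ ℓ) :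
    ∀ i, ℓ ≤ i → ∀ r, 0 < r → r ≤ F (ℓ - 1) →
      alphaBar (F i + r) ≤ F ℓ ∨ F i + r = F (ℓ + 1) ∨
        (alphaBar (F i + r) = F (ℓ + 1) ∧ F (ℓ + 2) ≤ F i) := by
  intro i
  induction i using Nat.strong_induction_on with
  | _ i IH =>
    intro hi r hr hr2
    have eℓ : F (ℓ + 1) = F ℓ + F (ℓ - 1) := F_split _ _ _ (by omega) (by omega)
    have eℓ2 : F ℓ = F (ℓ - 1) + F (ℓ - 2) := F_split _ _ _ (by omega) (by omega)
    rcases (by omega : i = ℓ ∨ i = ℓ + 1 ∨ i = ℓ + 2 ∨ ℓ + 3 ≤ i) with h | h | h | hbig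
    · -- i = ℓ
      rw [h]
      rcases eq_or_lt_of_le hr2 with heq | hrlt
      · right; left; omega
      · left
        rcases (by omega : ℓ = 2 ∨ 3 ≤ ℓ) with h2 | hl3
        · exfalso
          rw [h2] at hrlt
          have hF1 : F (2 - 1) = 1 := by decide
          omega
        · have m1 : F (ℓ - 3) ≤ F (ℓ - 2) := F_mono (by omega)
          rw [alphaBar_reduce hl3 hr (by omega)]
          have := alphaBar_le (F (ℓ - 3) + r)
          omega
    · -- i = ℓ + 1
      rw [h]
      left
      have hred : alphaBar (F (ℓ + 1) + r) = alphaBar (F (ℓ + 1 - 3) + r) := by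
        refine alphaBar_reduce (by omega) hr ?_
        have h1 : F (ℓ - 1) < F ℓ := F_lt_F (i := ℓ - 1) (j := ℓ) (by omega) (by omega)
        have h2 : ℓ + 1 - 1 = ℓ := by omega
        rw [h2]; omega
      have h3 : ℓ + 1 - 3 = ℓ - 2 := by omega
      rw [hred, h3]
      have := alphaBar_le (F (ℓ - 2) + r)
      omega
    · -- i = ℓ + 2
      rw [h]
      left
      have hred : alphaBar (F (ℓ + 2) + r) = alphaBar (F (ℓ + 2 - 3) + r) := by
        refine alphaBar_reduce (by omega) hr ?_
        have h1 : F (ℓ - 1) < F (ℓ + 1) := F_lt_F (i := ℓ - 1) (j := ℓ + 1) (by omega) (by omega)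
        have h2 : ℓ + 2 - 1 = ℓ + 1 := by omega
        rw [h2]; omega
      have h3 : ℓ + 2 - 3 = ℓ - 1 := by omega
      rw [hred, h3]
      -- now bound α (F (ℓ-1) + r) for 0 < r ≤ F (ℓ-1)
      rcases lt_trichotomy r (F (ℓ - 2)) with hc | hc | hc
      · have := alphaBar_le (F (ℓ - 1) + r); omega
      · rw [(by omega : F (ℓ - 1) + r = F ℓ), alphaBar_of_isFib (isFib_F _)]
      · -- F (ℓ-2) < r ≤ F (ℓ-1); then ℓ ≥ 3
        have hl3 : 3 ≤ ℓ := by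
          by_contra hcon
          obtain rfl : ℓ = 2 := by omega
          norm_num [F] at hc hr2; omega
        have eℓ3 : F (ℓ - 1) = F (ℓ - 2) + F (ℓ - 3) := F_split _ _ _ (by omega) (by omega)
        have harg : F (ℓ - 1) + r = F ℓ + (r - F (ℓ - 2)) := by omega
        have hred2 : alphaBar (F ℓ + (r - F (ℓ - 2))) =
            alphaBar (F (ℓ - 3) + (r - F (ℓ - 2))) := by
          refine alphaBar_reduce hl3 (by omega) ?_
          have : F (ℓ - 3) < F (ℓ - 1) := by
            rcases (by omega : ℓ = 3 ∨ 4 ≤ ℓ) with rfl | h4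
            · norm_num [F]
            · calc F (ℓ - 3) ≤ F (ℓ - 2) := F_mono (by omega)
                _ < F (ℓ - 1) := F_lt_F (i := ℓ - 2) (j := ℓ - 1) (by omega) (by omega)
          omega
        rw [harg, hred2]
        have := alphaBar_le (F (ℓ - 3) + (r - F (ℓ - 2)))
        have m2 : F (ℓ - 3) ≤ F (ℓ - 2) := F_mono (by omega)
        omega
    · -- step
      have hred : alphaBar (F i + r) = alphaBar (F (i - 3) + r) := by
        refine alphaBar_reduce (by omega) hr (lt_of_le_of_lt hr2 ?_)
        exact F_lt_F (i := ℓ - 1) (j := i - 1) (by omega) (by omega)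
      rcases IH (i - 3) (by omega) (by omega) r hr hr2 with h | h | h
      · left; omega
      · right; right
        rw [hred, h, alphaBar_of_isFib (isFib_F _)]
        exact ⟨rfl, F_mono (by omega)⟩
      · right; right
        exact ⟨by omega, le_trans h.2 (F_mono (by omega))⟩

/-- `α(F (ℓ+1) + F (ℓ-1)) = F ℓ`. -/
lemma aux_s1 {ℓ : ℕ} (hℓ : 2 ≤ ℓ) : alphaBar (F (ℓ + 1) + F (ℓ - 1)) = F ℓ := by
  have eℓ2 : F ℓ = F (ℓ - 1) + F (ℓ - 2) := F_split _ _ _ (by omega) (by omega)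
  have hred : alphaBar (F (ℓ + 1) + F (ℓ - 1)) = alphaBar (F (ℓ + 1 - 3) + F (ℓ - 1)) := by
    refine alphaBar_reduce (by omega) (F_pos _) ?_
    have h1 : F (ℓ - 1) < F ℓ := F_lt_F (i := ℓ - 1) (j := ℓ) (by omega) (by omega)
    have h2 : ℓ + 1 - 1 = ℓ := by omega
    rw [h2]; exact h1
  have h3 : ℓ + 1 - 3 = ℓ - 2 := by omega
  rw [hred, h3, (by omega : F (ℓ - 2) + F (ℓ - 1) = F ℓ), alphaBar_of_isFib (isFib_F _)]

/-- `α(F (ℓ+2) + F ℓ) = F (ℓ+1)`. -/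
lemma aux_s2 {ℓ : ℕ} (hℓ : 2 ≤ ℓ) : alphaBar (F (ℓ + 2) + F ℓ) = F (ℓ + 1) := by
  have eℓ : F (ℓ + 1) = F ℓ + F (ℓ - 1) := F_split _ _ _ (by omega) (by omega)
  have hred : alphaBar (F (ℓ + 2) + F ℓ) = alphaBar (F (ℓ + 2 - 3) + F ℓ) := by
    refine alphaBar_reduce (by omega) (F_pos _) ?_
    have h1 : F ℓ < F (ℓ + 1) := F_lt_F (i := ℓ) (j := ℓ + 1) (by omega) (by omega)
    have h2 : ℓ + 2 - 1 = ℓ + 1 := by omega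
    rw [h2]; exact h1
  have h3 : ℓ + 2 - 3 = ℓ - 1 := by omega
  rw [hred, h3, (by omega : F (ℓ - 1) + F ℓ = F (ℓ + 1)), alphaBar_of_isFib (isFib_F _)]

lemma pred_lemma {ℓ : ℕ} (hℓ : 2 ≤ ℓ) :
    ∀ i, ℓ + 1 ≤ i → ∃ t0, 0 < t0 ∧ t0 ≤ F (ℓ - 1) ∧ F ℓ ≤ alphaBar (F (i + 1) - t0) := by
  intro i
  induction i using Nat.strong_induction_on with
  | _ i IH =>
    intro hi
    have hFpos := F_pos (ℓ - 1)
    have hFpos2 := F_pos (ℓ - 2)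
    have eℓ : F (ℓ + 1) = F ℓ + F (ℓ - 1) := F_split _ _ _ (by omega) (by omega)
    have eℓ2 : F ℓ = F (ℓ - 1) + F (ℓ - 2) := F_split _ _ _ (by omega) (by omega)
    have eℓ3 : F (ℓ + 2) = F (ℓ + 1) + F ℓ := F_split _ _ _ (by omega) (by omega)
    have eℓ4 : F (ℓ + 3) = F (ℓ + 2) + F (ℓ + 1) := F_split _ _ _ (by omega) (by omega)
    rcases (by omega : i = ℓ + 1 ∨ i = ℓ + 2 ∨ i = ℓ + 3 ∨ ℓ + 4 ≤ i) with h | h | h | hbig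
    · rw [h]
      refine ⟨F (ℓ - 2), hFpos2, F_mono (by omega), ?_⟩
      have harg : F (ℓ + 1 + 1) - F (ℓ - 2) = F (ℓ + 1) + F (ℓ - 1) := by
        have : F (ℓ + 1 + 1) = F (ℓ + 2) := rfl
        omega
      rw [harg, aux_s1 hℓ]
    · rw [h]
      refine ⟨F (ℓ - 1), hFpos, le_rfl, ?_⟩
      have harg : F (ℓ + 2 + 1) - F (ℓ - 1) = F (ℓ + 2) + F ℓ := by
        have : F (ℓ + 2 + 1) = F (ℓ + 3) := rfl
        omega
      rw [harg, aux_s2 hℓ]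
      exact F_mono (by omega)
    · rw [h]
      refine ⟨F (ℓ - 1), hFpos, le_rfl, ?_⟩
      have hred : alphaBar (F (ℓ + 3 + 1) - F (ℓ - 1)) =
          alphaBar (F (ℓ + 3 - 2) - F (ℓ - 1)) := by
        refine alphaBar_reduce2 (by omega) hFpos ?_
        have h1 : F (ℓ - 1) < F ℓ := F_lt_F (i := ℓ - 1) (j := ℓ) (by omega) (by omega)
        have h2 : ℓ + 3 - 3 = ℓ := by omega
        rw [h2]; exact h1
      have h3 : ℓ + 3 - 2 = ℓ + 1 := by omega
      rw [hred, h3, (by omega : F (ℓ + 1) - F (ℓ - 1) = F ℓ), alphaBar_of_isFib (isFib_F _)]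
    · obtain ⟨t0, h1, h2, h3⟩ := IH (i - 3) (by omega) (by omega)
      refine ⟨t0, h1, h2, ?_⟩
      have hred : alphaBar (F (i + 1) - t0) = alphaBar (F (i - 2) - t0) := by
        refine alphaBar_reduce2 (by omega) h1 ?_
        exact lt_of_le_of_lt h2 (F_lt_F (i := ℓ - 1) (j := i - 3) (by omega) (by omega))
      have h4 : F (i - 3 + 1) = F (i - 2) := by congr 1; omega
      rw [hred, ← h4]; exact h3

lemma pred2_lemma {ℓ : ℕ} (hℓ : 2 ≤ ℓ) :
    ∀ i, ℓ + 1 ≤ i → ∀ t, 0 < t → t ≤ F (ℓ - 1) → alphaBar (F (i + 1) - t) ≤ F (ℓ + 1) := by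
  intro i
  induction i using Nat.strong_induction_on with
  | _ i IH =>
    intro hi t ht ht2
    have hFpos := F_pos (ℓ - 1)
    have hFpos2 := F_pos (ℓ - 2)
    have eℓ : F (ℓ + 1) = F ℓ + F (ℓ - 1) := F_split _ _ _ (by omega) (by omega)
    have eℓ2 : F ℓ = F (ℓ - 1) + F (ℓ - 2) := F_split _ _ _ (by omega) (by omega)
    have eℓ3 : F (ℓ + 2) = F (ℓ + 1) + F ℓ := F_split _ _ _ (by omega) (by omega)
    have eℓ4 : F (ℓ + 3) = F (ℓ + 2) + F (ℓ + 1) := F_split _ _ _ (by omega) (by omega)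
    rcases (by omega : i = ℓ + 1 ∨ i = ℓ + 2 ∨ i = ℓ + 3 ∨ ℓ + 4 ≤ i) with h | h | h | hbig
    · rw [h]
      have harg : F (ℓ + 1 + 1) - t = F (ℓ + 1) + (F ℓ - t) := by
        have : F (ℓ + 1 + 1) = F (ℓ + 2) := rfl
        omega
      have hred : alphaBar (F (ℓ + 1) + (F ℓ - t)) =
          alphaBar (F (ℓ + 1 - 3) + (F ℓ - t)) := by
        refine alphaBar_reduce (by omega) (by omega) ?_
        have h2 : ℓ + 1 - 1 = ℓ := by omega
        rw [h2]; omega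
      have h3 : ℓ + 1 - 3 = ℓ - 2 := by omega
      rw [harg, hred, h3]
      have := alphaBar_le (F (ℓ - 2) + (F ℓ - t))
      have m1 : F (ℓ - 2) ≤ F (ℓ - 1) := F_mono (by omega)
      omega
    · rw [h]
      have harg : F (ℓ + 2 + 1) - t = F (ℓ + 2) + (F (ℓ + 1) - t) := by
        have : F (ℓ + 2 + 1) = F (ℓ + 3) := rfl
        omega
      have hred : alphaBar (F (ℓ + 2) + (F (ℓ + 1) - t)) =
          alphaBar (F (ℓ + 2 - 3) + (F (ℓ + 1) - t)) := by
        refine alphaBar_reduce (by omega) (by omega) ?_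
        have h2 : ℓ + 2 - 1 = ℓ + 1 := by omega
        rw [h2]; omega
      have h3 : ℓ + 2 - 3 = ℓ - 1 := by omega
      rw [harg, hred, h3]
      rcases eq_or_lt_of_le ht2 with heq | hlt
      · have harg2 : F (ℓ - 1) + (F (ℓ + 1) - t) = F (ℓ + 1) := by omega
        rw [harg2, alphaBar_of_isFib (isFib_F _)]
      · have harg2 : F (ℓ - 1) + (F (ℓ + 1) - t) = F (ℓ + 1) + (F (ℓ - 1) - t) := by omega
        have hred2 : alphaBar (F (ℓ + 1) + (F (ℓ - 1) - t)) =
            alphaBar (F (ℓ + 1 - 3) + (F (ℓ - 1) - t)) := by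
          refine alphaBar_reduce (by omega) (by omega) ?_
          have h2 : ℓ + 1 - 1 = ℓ := by omega
          rw [h2]; omega
        have h4 : ℓ + 1 - 3 = ℓ - 2 := by omega
        rw [harg2, hred2, h4]
        have := alphaBar_le (F (ℓ - 2) + (F (ℓ - 1) - t))
        omega
    · rw [h]
      have hred : alphaBar (F (ℓ + 3 + 1) - t) = alphaBar (F (ℓ + 3 - 2) - t) := by
        refine alphaBar_reduce2 (by omega) ht ?_
        have h1 : F (ℓ - 1) < F ℓ := F_lt_F (i := ℓ - 1) (j := ℓ) (by omega) (by omega)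
        have h2 : ℓ + 3 - 3 = ℓ := by omega
        rw [h2]; omega
      have h3 : ℓ + 3 - 2 = ℓ + 1 := by omega
      rw [hred, h3]
      have := alphaBar_le (F (ℓ + 1) - t)
      omega
    · have hred : alphaBar (F (i + 1) - t) = alphaBar (F (i - 2) - t) := by
        refine alphaBar_reduce2 (by omega) ht ?_
        exact lt_of_le_of_lt ht2 (F_lt_F (i := ℓ - 1) (j := i - 3) (by omega) (by omega))
      have h4 : F (i - 3 + 1) = F (i - 2) := by congr 1; omega
      rw [hred, ← h4]
      exact IH (i - 3) (by omega) (by omega) t ht ht2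

lemma int_goal {x y ax ay : ℕ}
    (h : (y : ℤ) - x ≤ (ay : ℤ) - ax ∨ (y : ℤ) - x ≤ (ax : ℤ) - ay) :
    (y : ℤ) - x ≤ |(ay : ℤ) - (ax : ℤ)| := by
  rcases h with h | h
  · exact h.trans (le_abs_self _)
  · exact h.trans (by rw [abs_sub_comm]; exact le_abs_self _)

theorem VBar_consecutive_properties (ℓ : ℕ) (hℓ : 2 ≤ ℓ) (x y : ℕ)
    (h : ConsecIn (VBar ℓ) x y) :
    ¬(x ∈ VBar (ℓ + 2) ∧ y ∈ VBar (ℓ + 2)) ∧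
    (x ∈ VBar (ℓ + 1) ∨ y ∈ VBar (ℓ + 1)) ∧
    ((y : ℤ) - (x : ℤ) ≤ |(alphaBar y : ℤ) - (alphaBar x : ℤ)|) := by
  induction x using Nat.strong_induction_on generalizing y with
  | _ x IH =>
    obtain ⟨hx, hy, hxy, hcons⟩ := h
    have hax : F ℓ ≤ alphaBar x := hx
    have hay : F ℓ ≤ alphaBar y := hy
    have hxF : F ℓ ≤ x := le_trans hax (alphaBar_le x)
    have hyF : F ℓ ≤ y := le_trans hay (alphaBar_le y)
    have hFℓpos := F_pos ℓ
    obtain ⟨i, hige1, hile, hxlt⟩ := exists_F_interval x (by omega)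
    have hiℓ : ℓ ≤ i := by
      by_contra hc
      push_neg at hc
      have : F (i + 1) ≤ F ℓ := F_mono (by omega)
      omega
    have hyle : y ≤ F (i + 1) := by
      by_contra hc
      push_neg at hc
      refine hcons (F (i + 1)) ?_ ⟨by omega, hc⟩
      show F ℓ ≤ alphaBar (F (i + 1))
      rw [alphaBar_of_isFib (isFib_F _)]
      exact F_mono (by omega)
    have eℓ : F (ℓ + 1) = F ℓ + F (ℓ - 1) := F_split _ _ _ (by omega) (by omega)
    have eℓ2 : F ℓ = F (ℓ - 1) + F (ℓ - 2) := F_split _ _ _ (by omega) (by omega)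
    have eℓ3 : F (ℓ + 2) = F (ℓ + 1) + F ℓ := F_split _ _ _ (by omega) (by omega)
    by_cases hxf : IsFib x
    · -- x = F i
      have hxeq : x = F i := by
        rcases eq_or_lt_of_le hile with he | hlt
        · omega
        · exact absurd hxf (not_isFib_between hlt hxlt)
      by_cases hyf : IsFib y
      · -- Case B1 : y = F (i+1)
        have hyeq : y = F (i + 1) := by
          rcases eq_or_lt_of_le hyle with he | hlt
          · exact he
          · exact absurd hyf (not_isFib_between (by omega) hlt)
        have e3 : F (i + 1) = F i + F (i - 1) := F_split _ _ _ (by omega) (by omega)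
        have hile2 : i ≤ ℓ + 1 := by
          by_contra hc
          push_neg at hc
          have e2 : F i = F (i - 1) + F (i - 2) := F_split _ _ _ (by omega) (by omega)
          have e1 : F (i - 1) = F (i - 2) + F (i - 3) := F_split _ _ _ (by omega) (by omega)
          have hzlt : F (i - 2) < F (i - 1) :=
            F_lt_F (i := i - 2) (j := i - 1) (by omega) (by omega)
          have hred : alphaBar (F i + F (i - 2)) = alphaBar (F (i - 3) + F (i - 2)) := by
            refine alphaBar_reduce (by omega) (F_pos _) hzlt
          have hp2 := F_pos (i - 2)
          have hp3 := F_pos (i - 3)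
          refine hcons (F i + F (i - 2)) ?_ ⟨by omega, by omega⟩
          show F ℓ ≤ alphaBar (F i + F (i - 2))
          rw [hred, (by omega : F (i - 3) + F (i - 2) = F (i - 1)),
            alphaBar_of_isFib (isFib_F _)]
          exact F_mono (by omega)
        have hαx : alphaBar x = F i := by rw [hxeq, alphaBar_of_isFib (isFib_F _)]
        have hαy : alphaBar y = F (i + 1) := by rw [hyeq, alphaBar_of_isFib (isFib_F _)]
        refine ⟨?_, ?_, ?_⟩
        · rintro ⟨c1, _⟩
          have c1' : F (ℓ + 2) ≤ alphaBar x := c1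
          have : F i < F (ℓ + 2) := F_lt_F (i := i) (j := ℓ + 2) (by omega) (by omega)
          omega
        · right
          show F (ℓ + 1) ≤ alphaBar y
          rw [hαy]
          exact F_mono (by omega)
        · exact int_goal (Or.inl (by omega))
      · -- Case B2 : x = F i, y non-fib
        have hylt : y < F (i + 1) := by
          rcases eq_or_lt_of_le hyle with he | hlt
          · exact absurd (he ▸ isFib_F (i + 1)) hyf
          · exact hlt
        have hygt : F i < y := by omega
        have hiℓ1 : ℓ + 1 ≤ i := by
          rcases eq_or_lt_of_le hiℓ with he | hlt
          · exfalso
            rw [← he] at hygt hylt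
            have := alphaBar_lt_of_between hℓ hygt hylt
            omega
          · omega
        obtain ⟨r0, hr01, hr02, hr03⟩ := succ_lemma hℓ i hiℓ
        have hrle : y ≤ F i + r0 := by
          by_contra hc
          push_neg at hc
          exact hcons (F i + r0) hr03 ⟨by omega, by omega⟩
        have hyr : F i + (y - F i) = y := by omega
        rcases q2_lemma hℓ i hiℓ (y - F i) (by omega) (by omega) with hq | hq | hq
        · rw [hyr] at hq
          have hαy : alphaBar y = F ℓ := le_antisymm hq hay
          have hαx : alphaBar x = F i := by rw [hxeq, alphaBar_of_isFib (isFib_F _)]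
          have hm : F (ℓ + 1) ≤ F i := F_mono (by omega)
          refine ⟨?_, ?_, ?_⟩
          · rintro ⟨_, c2⟩
            have c2' : F (ℓ + 2) ≤ alphaBar y := c2
            have : F ℓ < F (ℓ + 2) := F_lt_F (i := ℓ) (j := ℓ + 2) (by omega) (by omega)
            omega
          · left
            show F (ℓ + 1) ≤ alphaBar x
            omega
          · exact int_goal (Or.inr (by omega))
        · rw [hyr] at hq
          exact absurd (hq ▸ isFib_F (ℓ + 1)) hyf
        · rw [hyr] at hq
          obtain ⟨hαy, hFi⟩ := hq
          have hαx : alphaBar x = F i := by rw [hxeq, alphaBar_of_isFib (isFib_F _)]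
          refine ⟨?_, ?_, ?_⟩
          · rintro ⟨_, c2⟩
            have c2' : F (ℓ + 2) ≤ alphaBar y := c2
            have : F (ℓ + 1) < F (ℓ + 2) :=
              F_lt_F (i := ℓ + 1) (j := ℓ + 2) (by omega) (by omega)
            omega
          · left
            show F (ℓ + 1) ≤ alphaBar x
            omega
          · refine int_goal (Or.inr ?_)
            have hm : F (ℓ - 1) ≤ F ℓ := F_mono (by omega)
            omega
    · -- x non-fib
      have hxgt : F i < x := by
        rcases eq_or_lt_of_le hile with he | hlt
        · exact absurd (he ▸ isFib_F i) hxf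
        · exact hlt
      have hiℓ1 : ℓ + 1 ≤ i := by
        rcases eq_or_lt_of_le hiℓ with he | hlt
        · exfalso
          rw [← he] at hxgt hxlt
          have := alphaBar_lt_of_between hℓ hxgt hxlt
          omega
        · omega
      have hi3 : 3 ≤ i := by omega
      have e1 : F (i - 1) = F (i - 2) + F (i - 3) := F_split _ _ _ (by omega) (by omega)
      have e2 : F i = F (i - 1) + F (i - 2) := F_split _ _ _ (by omega) (by omega)
      have e3 : F (i + 1) = F i + F (i - 1) := F_split _ _ _ (by omega) (by omega)
      by_cases hyf : IsFib y
      · -- Case B3 : y = F (i+1), x non-fib predecessor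
        have hyeq : y = F (i + 1) := by
          rcases eq_or_lt_of_le hyle with he | hlt
          · exact he
          · exact absurd hyf (not_isFib_between (by omega) hlt)
        obtain ⟨t0, ht01, ht02, ht03⟩ := pred_lemma hℓ i hiℓ1
        have hm : F (ℓ - 1) ≤ F (i - 2) := F_mono (by omega)
        have hm2 : F (i - 2) < F (i - 1) :=
          F_lt_F (i := i - 2) (j := i - 1) (by omega) (by omega)
        have htle : F (i + 1) - t0 ≤ x := by
          by_contra hc
          push_neg at hc
          exact hcons (F (i + 1) - t0) ht03 ⟨hc, by omega⟩
        have hαx_le : alphaBar x ≤ F (ℓ + 1) := by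
          have := pred2_lemma hℓ i hiℓ1 (F (i + 1) - x) (by omega) (by omega)
          rwa [(by omega : F (i + 1) - (F (i + 1) - x) = x)] at this
        have hαy : alphaBar y = F (i + 1) := by rw [hyeq, alphaBar_of_isFib (isFib_F _)]
        have hm3 : F (ℓ + 2) ≤ F (i + 1) := F_mono (by omega)
        refine ⟨?_, ?_, ?_⟩
        · rintro ⟨c1, _⟩
          have c1' : F (ℓ + 2) ≤ alphaBar x := c1
          have : F (ℓ + 1) < F (ℓ + 2) :=
            F_lt_F (i := ℓ + 1) (j := ℓ + 2) (by omega) (by omega)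
          omega
        · right
          show F (ℓ + 1) ≤ alphaBar y
          rw [hαy]
          exact F_mono (by omega)
        · refine int_goal (Or.inl ?_)
          have hm4 : F (ℓ - 1) ≤ F ℓ := F_mono (by omega)
          omega
      · -- Case A : x, y non-fib, recurse
        have hylt : y < F (i + 1) := by
          rcases eq_or_lt_of_le hyle with he | hlt
          · exact absurd (he ▸ isFib_F (i + 1)) hyf
          · exact hlt
        have hxarg : F i + (x - F i) = x := by omega
        have hyarg : F i + (y - F i) = y := by omega
        have hredx : alphaBar x = alphaBar (F (i - 3) + (x - F i)) := by
          have := alphaBar_reduce (i := i) (r := x - F i) hi3 (by omega) (by omega)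
          rwa [hxarg] at this
        have hredy : alphaBar y = alphaBar (F (i - 3) + (y - F i)) := by
          have := alphaBar_reduce (i := i) (r := y - F i) hi3 (by omega) (by omega)
          rwa [hyarg] at this
        have hFi2pos := F_pos (i - 2)
        have hFi3pos := F_pos (i - 3)
        have hcons' : ConsecIn (VBar ℓ) (F (i - 3) + (x - F i)) (F (i - 3) + (y - F i)) := by
          refine ⟨?_, ?_, by omega, ?_⟩
          · show F ℓ ≤ alphaBar (F (i - 3) + (x - F i))
            rw [← hredx]; exact hax
          · show F ℓ ≤ alphaBar (F (i - 3) + (y - F i))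
            rw [← hredy]; exact hay
          · rintro z' hz' ⟨hz1, hz2⟩
            have hz'mem : F ℓ ≤ alphaBar z' := hz'
            set z := z' + 2 * F (i - 2) with hzdef
            have hzx : x < z := by omega
            have hzy : z < y := by omega
            have hzarg : F i + (z - F i) = z := by omega
            have hredz : alphaBar z = alphaBar (F (i - 3) + (z - F i)) := by
              have := alphaBar_reduce (i := i) (r := z - F i) hi3 (by omega) (by omega)
              rwa [hzarg] at this
            have hz'arg : F (i - 3) + (z - F i) = z' := by omega
            refine hcons z ?_ ⟨hzx, hzy⟩
            show F ℓ ≤ alphaBar z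
            rw [hredz, hz'arg]
            exact hz'mem
        obtain ⟨C1, C2, C3⟩ := IH (F (i - 3) + (x - F i)) (by omega) _ hcons'
        have hαx' : alphaBar (F (i - 3) + (x - F i)) = alphaBar x := hredx.symm
        have hαy' : alphaBar (F (i - 3) + (y - F i)) = alphaBar y := hredy.symm
        refine ⟨?_, ?_, ?_⟩
        · rintro ⟨c1, c2⟩
          refine C1 ⟨?_, ?_⟩
          · show F (ℓ + 2) ≤ alphaBar (F (i - 3) + (x - F i))
            rw [hαx']; exact c1
          · show F (ℓ + 2) ≤ alphaBar (F (i - 3) + (y - F i))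
            rw [hαy']; exact c2
        · rcases C2 with hc | hc
          · left
            have hc' : F (ℓ + 1) ≤ alphaBar (F (i - 3) + (x - F i)) := hc
            show F (ℓ + 1) ≤ alphaBar x
            rwa [hαx'] at hc'
          · right
            have hc' : F (ℓ + 1) ≤ alphaBar (F (i - 3) + (y - F i)) := hc
            show F (ℓ + 1) ≤ alphaBar y
            rwa [hαy'] at hc'
        · rw [hαx', hαy'] at C3
          have harith : ((F (i - 3) + (y - F i) : ℕ) : ℤ) - ((F (i - 3) + (x - F i) : ℕ) : ℤ)
              = (y : ℤ) - (x : ℤ) := by omega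
          rwa [harith] at C3
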